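/- Let R ≥ 0, s > 0, and μ, y, t ∈ ℝ with |y − μ| ≤ R·s. Set I = max(t − y, 0) and EI = s·τ((t − μ)/s), where τ(z) = z·Φ(z) + φ(z). Then I − R·s ≤ EI ≤ I + (R + (2π)^(−1/2))·s. -/

import Mathlib

/-! Both bounds rest on the integral representations
`τ(z) = ∫_{x ≤ z} (z - x) φ(x) dx` and `τ(z) - z = ∫_{x > z} (x - z) φ(x) dx`,
obtained from `(-φ)' = x φ(x)`; they give `max z 0 ≤ τ z`. Conversely `z Φ(z) ≤ max z 0` and
`φ ≤ (2π)^(-1/2)`. Rescaling by `s` and the estimate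
`|max (t - μ) 0 - max (t - y) 0| ≤ |y - μ| ≤ R s` turn these into the two inequalities. -/

open MeasureTheory ProbabilityTheory Real

/-- The standard normal cumulative distribution function `Φ`. -/
noncomputable def stdNormalCDF (z : ℝ) : ℝ :=
  ((gaussianReal 0 1) (Set.Iic z)).toReal

/-- The standard normal density `φ(z) = (2π)^(−1/2) exp(−z²/2)`. -/
noncomputable def stdNormalPDF (z : ℝ) : ℝ :=
  (Real.sqrt (2 * Real.pi))⁻¹ * Real.exp (-z ^ 2 / 2)

/-- `τ(z) = z·Φ(z) + φ(z)`. -/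
noncomputable def tau (z : ℝ) : ℝ := z * stdNormalCDF z + stdNormalPDF z

open Set Filter

lemma stdNormalPDF_eq_gaussianPDFReal : stdNormalPDF = gaussianPDFReal 0 1 := by
  ext x
  simp [stdNormalPDF, gaussianPDFReal]

lemma stdNormalPDF_nonneg (z : ℝ) : 0 ≤ stdNormalPDF z := by
  unfold stdNormalPDF
  positivity

lemma stdNormalPDF_le (z : ℝ) : stdNormalPDF z ≤ (√(2 * π))⁻¹ := by
  unfold stdNormalPDF
  have : rexp (-z ^ 2 / 2) ≤ 1 := exp_le_one_iff.2 (by nlinarith [sq_nonneg z])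
  exact mul_le_of_le_one_right (by positivity) this

lemma integrable_stdNormalPDF : Integrable stdNormalPDF :=
  stdNormalPDF_eq_gaussianPDFReal ▸ integrable_gaussianPDFReal 0 1

lemma integrable_mul_stdNormalPDF : Integrable fun x ↦ x * stdNormalPDF x := by
  refine ((integrable_mul_exp_neg_mul_sq (b := 2⁻¹) (by norm_num)).const_mul
    (√(2 * π))⁻¹).congr (ae_of_all _ fun x ↦ ?_)
  simp only [stdNormalPDF]
  ring_nf

lemma hasDerivAt_neg_stdNormalPDF (x : ℝ) :
    HasDerivAt (fun x ↦ -stdNormalPDF x) (x * stdNormalPDF x) x := by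
  have h : HasDerivAt (fun x : ℝ ↦ -x ^ 2 / 2) (-x) x :=
    ((hasDerivAt_pow 2 x).neg.div_const 2).congr_deriv (by ring)
  refine (h.exp.const_mul (√(2 * π))⁻¹).neg.congr_deriv ?_
  simp only [stdNormalPDF]
  ring

lemma integral_Iic_mul_stdNormalPDF (a : ℝ) :
    ∫ x in Iic a, x * stdNormalPDF x = -stdNormalPDF a := by
  have hlim := tendsto_zero_of_hasDerivAt_of_integrableOn_Iic (a := a)
    (fun x _ ↦ hasDerivAt_neg_stdNormalPDF x) integrable_mul_stdNormalPDF.integrableOn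
    integrable_stdNormalPDF.neg.integrableOn
  rw [integral_Iic_of_hasDerivAt_of_tendsto' (fun x _ ↦ hasDerivAt_neg_stdNormalPDF x)
    integrable_mul_stdNormalPDF.integrableOn hlim, sub_zero]

lemma integral_Ioi_mul_stdNormalPDF (a : ℝ) :
    ∫ x in Ioi a, x * stdNormalPDF x = stdNormalPDF a := by
  have hlim := tendsto_zero_of_hasDerivAt_of_integrableOn_Ioi (a := a)
    (fun x _ ↦ hasDerivAt_neg_stdNormalPDF x) integrable_mul_stdNormalPDF.integrableOn
    integrable_stdNormalPDF.neg.integrableOn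
  rw [integral_Ioi_of_hasDerivAt_of_tendsto' (fun x _ ↦ hasDerivAt_neg_stdNormalPDF x)
    integrable_mul_stdNormalPDF.integrableOn hlim, zero_sub, neg_neg]

lemma stdNormalCDF_eq_integral (a : ℝ) : stdNormalCDF a = ∫ x in Iic a, stdNormalPDF x := by
  rw [stdNormalCDF, gaussianReal_apply_eq_integral 0 one_ne_zero, stdNormalPDF_eq_gaussianPDFReal,
    ENNReal.toReal_ofReal (integral_nonneg (gaussianPDFReal_nonneg 0 1))]

lemma one_sub_stdNormalCDF_eq_integral (a : ℝ) :
    1 - stdNormalCDF a = ∫ x in Ioi a, stdNormalPDF x := by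
  have htotal : ∫ x, stdNormalPDF x = 1 :=
    stdNormalPDF_eq_gaussianPDFReal ▸ integral_gaussianPDFReal_eq_one 0 one_ne_zero
  rw [← htotal, ← intervalIntegral.integral_Iic_add_Ioi integrable_stdNormalPDF.integrableOn
    integrable_stdNormalPDF.integrableOn, stdNormalCDF_eq_integral, add_sub_cancel_left]

lemma stdNormalCDF_nonneg (a : ℝ) : 0 ≤ stdNormalCDF a := ENNReal.toReal_nonneg

lemma stdNormalCDF_le_one (a : ℝ) : stdNormalCDF a ≤ 1 := by
  have := one_sub_stdNormalCDF_eq_integral a ▸ setIntegral_nonneg measurableSet_Ioi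
    fun x _ ↦ stdNormalPDF_nonneg x
  linarith

lemma tau_eq_integral_Iic (z : ℝ) : tau z = ∫ x in Iic z, (z - x) * stdNormalPDF x := by
  simp only [sub_mul]
  rw [integral_sub (integrable_stdNormalPDF.const_mul z).integrableOn
    integrable_mul_stdNormalPDF.integrableOn, integral_const_mul, ← stdNormalCDF_eq_integral,
    integral_Iic_mul_stdNormalPDF, tau, sub_neg_eq_add]

lemma tau_sub_self_eq_integral_Ioi (z : ℝ) :
    tau z - z = ∫ x in Ioi z, (x - z) * stdNormalPDF x := by
  simp only [sub_mul]
  rw [integral_sub integrable_mul_stdNormalPDF.integrableOn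
    (integrable_stdNormalPDF.const_mul z).integrableOn, integral_const_mul,
    ← one_sub_stdNormalCDF_eq_integral, integral_Ioi_mul_stdNormalPDF, tau]
  ring

lemma tau_nonneg (z : ℝ) : 0 ≤ tau z :=
  tau_eq_integral_Iic z ▸ setIntegral_nonneg measurableSet_Iic
    fun x hx ↦ mul_nonneg (sub_nonneg.2 hx) (stdNormalPDF_nonneg x)

lemma self_le_tau (z : ℝ) : z ≤ tau z := by
  have := tau_sub_self_eq_integral_Ioi z ▸ setIntegral_nonneg measurableSet_Ioi
    fun x hx ↦ mul_nonneg (sub_nonneg.2 (le_of_lt hx)) (stdNormalPDF_nonneg x)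
  linarith

lemma max_le_tau (z : ℝ) : max z 0 ≤ tau z := max_le (self_le_tau z) (tau_nonneg z)

lemma tau_le_max_add (z : ℝ) : tau z ≤ max z 0 + (√(2 * π))⁻¹ := by
  have hcdf : z * stdNormalCDF z ≤ max z 0 := by
    rcases le_total 0 z with hz | hz
    · exact (mul_le_of_le_one_right hz (stdNormalCDF_le_one z)).trans (le_max_left _ _)
    · exact (mul_nonpos_of_nonpos_of_nonneg hz (stdNormalCDF_nonneg z)).trans (le_max_right _ _)
  exact add_le_add hcdf (stdNormalPDF_le z)

lemma mul_max_div_eq {s : ℝ} (hs : 0 < s) (a : ℝ) : s * max (a / s) 0 = max a 0 := by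
  rw [mul_max_of_nonneg _ _ hs.le, mul_div_cancel₀ a hs.ne', mul_zero]

lemma max_le_mul_tau_div {s : ℝ} (hs : 0 < s) (a : ℝ) : max a 0 ≤ s * tau (a / s) :=
  mul_max_div_eq hs a ▸ mul_le_mul_of_nonneg_left (max_le_tau _) hs.le

lemma mul_tau_div_le {s : ℝ} (hs : 0 < s) (a : ℝ) :
    s * tau (a / s) ≤ max a 0 + (√(2 * π))⁻¹ * s := by
  calc s * tau (a / s) ≤ s * (max (a / s) 0 + (√(2 * π))⁻¹) :=
        mul_le_mul_of_nonneg_left (tau_le_max_add _) hs.le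
    _ = max a 0 + (√(2 * π))⁻¹ * s := by rw [mul_add, mul_max_div_eq hs, mul_comm s]

theorem expected_improvement_two_sided_bound_general
    (R s μ y t : ℝ) (hs : 0 < s) (hy : |y - μ| ≤ R * s) :
    max (t - y) 0 - R * s ≤ s * tau ((t - μ) / s)
    ∧ s * tau ((t - μ) / s)
        ≤ max (t - y) 0 + (R + (Real.sqrt (2 * Real.pi))⁻¹) * s := by
  have hI : |max (t - μ) 0 - max (t - y) 0| ≤ R * s :=
    (abs_max_sub_max_le_abs _ _ _).trans (by rwa [sub_sub_sub_cancel_left])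
  have hlow := max_le_mul_tau_div hs (t - μ)
  have hhigh := mul_tau_div_le hs (t - μ)
  constructor <;> linarith [abs_le.1 hI]

/-- Two-sided bound on expected improvement: if `|y − μ| ≤ R·s` with `R ≥ 0` and
`s > 0`, then with `I = max(t − y, 0)` and `EI = s·τ((t − μ)/s)` we have
`I − R·s ≤ EI ≤ I + (R + (2π)^(−1/2))·s`. -/
theorem expected_improvement_two_sided_bound
    (R s μ y t : ℝ) (hR : 0 ≤ R) (hs : 0 < s) (hy : |y - μ| ≤ R * s) :
    max (t - y) 0 - R * s ≤ s * tau ((t - μ) / s)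
    ∧ s * tau ((t - μ) / s)
        ≤ max (t - y) 0 + (R + (Real.sqrt (2 * Real.pi))⁻¹) * s :=
  expected_improvement_two_sided_bound_general R s μ y t hs hy
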